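/- arXiv:1303.5930 — 2 statements merged into one kernel-verified Lean document; each statement's English description precedes it below -/
import Mathlib

section
/- Let 0 = x_0 < x_1 < ⋯ < x_{J+1} = 1 be a partition of [0,1], r ≥ 1 an integer, and let V_r^h be the space of continuous functions v : [0,1] → ℝ that restrict to a polynomial of degree at most r on each subinterval [x_j, x_{j+1}] and satisfy v(0) = v(1). Let δ ≥ 0, τ > 0 and 0 ≤ ε ≤ √2. Suppose u, w ∈ V_r^h and ξ ∈ ℝ satisfy, for every v ∈ V_r^h, (w, v)_I + τ(δ + ε²/2)(∂ₓw, ∂ₓv)_I + τ(1 − ε²/2)(arctan(∂ₓw), ∂ₓv)_I = (u, v)_I + ε(√(1+|∂ₓu|²), v)_I·ξ. Then ½‖w‖²_{L²(I)} − ½‖u‖²_{L²(I)} + τ(δ + ε²/2)‖∂ₓw‖²_{L²(I)} ≤ ε(√(1+|∂ₓu|²), u)_I·ξ + (ε²/2)(1 + ‖∂ₓu‖²_{L²(I)})·ξ². -/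
/-!
Test the scheme with `v = w`. Since `τ (1 - ε²/2) ≥ 0` and `a · arctan a ≥ 0`, the arctan term
can be dropped. Polarization turns `(u, w)` into `½‖w‖² + ½‖u‖² - ½‖w - u‖²`, and in the noise
term `ε ξ (f, w) = ε ξ (f, u) + ε ξ (f, w - u)` with `f = √(1 + |∂ₓu|²)`, Young's inequality
absorbs the last summand into `½‖w - u‖²` at the price of `(ε ξ)²/2 ‖f‖² = (ε ξ)²/2 (1 + ‖∂ₓu‖²)`.
Since `∂ₓu` is a polynomial on each cell, all integrals involved are finite.
-/

/-- Membership in the finite element space `V_r^h` of continuous piecewise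
polynomials of degree at most `r` on the partition `0 = x_0 < ⋯ < x_{J+1} = 1`
satisfying the periodicity condition `v 0 = v 1`. -/
def IsFE (J r : ℕ) (x : Fin (J + 2) → ℝ) (v : ℝ → ℝ) : Prop :=
  ContinuousOn v (Set.Icc 0 1) ∧ v 0 = v 1 ∧
    ∀ j : Fin (J + 1), ∃ p : Polynomial ℝ, p.natDegree ≤ r ∧
      ∀ t ∈ Set.Icc (x j.castSucc) (x j.succ), v t = Polynomial.eval t p

open MeasureTheory Set intervalIntegral

theorem intervalIntegrable_of_eqOn_continuousOn_pieces {E : Type*} [NormedAddCommGroup E]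
    {n : ℕ} {x : Fin (n + 1) → ℝ} (hx : Monotone x) {g : ℝ → E}
    (hg : ∀ j : Fin n, ∃ G : ℝ → E, ContinuousOn G (Icc (x j.castSucc) (x j.succ)) ∧
      EqOn G g (Ioo (x j.castSucc) (x j.succ))) :
    IntervalIntegrable g volume (x 0) (x (Fin.last n)) := by
  refine Fin.induction (motive := fun k => IntervalIntegrable g volume (x 0) (x k))
    IntervalIntegrable.refl (fun j hj => hj.trans ?_) (Fin.last n)
  obtain ⟨G, hGc, hGg⟩ := hg j
  have hle : x j.castSucc ≤ x j.succ := hx (Fin.castSucc_le_succ j)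
  refine (hGc.intervalIntegrable_of_Icc hle).congr_uIoo ?_
  rwa [uIoo_of_le hle]

theorem IsFE.eqOn_deriv {J r : ℕ} {x : Fin (J + 2) → ℝ} {v : ℝ → ℝ} (hv : IsFE J r x v)
    (j : Fin (J + 1)) : ∃ p : Polynomial ℝ,
      EqOn (deriv v) (fun t => p.derivative.eval t) (Ioo (x j.castSucc) (x j.succ)) := by
  obtain ⟨p, -, hp⟩ := hv.2.2 j
  refine ⟨p, fun t ht => ?_⟩
  have hvp : v =ᶠ[nhds t] fun s => p.eval s :=
    Filter.eventually_of_mem (isOpen_Ioo.mem_nhds ht) fun s hs => hp s (Ioo_subset_Icc_self hs)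
  rw [hvp.deriv_eq, Polynomial.deriv]

theorem IsFE.intervalIntegrable_comp_deriv {J r : ℕ} {x : Fin (J + 2) → ℝ} (hx : Monotone x)
    (hx0 : x 0 = 0) (hx1 : x (Fin.last (J + 1)) = 1) {v : ℝ → ℝ} (hv : IsFE J r x v)
    {φ : ℝ → ℝ} (hφ : Continuous φ) :
    IntervalIntegrable (fun t => φ (deriv v t)) volume 0 1 := by
  rw [← hx0, ← hx1]
  refine intervalIntegrable_of_eqOn_continuousOn_pieces hx fun j => ?_
  obtain ⟨p, hp⟩ := hv.eqOn_deriv j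
  exact ⟨fun t => φ (p.derivative.eval t), (hφ.comp p.derivative.continuous).continuousOn,
    fun t ht => congrArg φ (hp ht).symm⟩

theorem intervalIntegral.integral_mul_eq_polarization {a b : ℝ} {f g : ℝ → ℝ}
    (hf : ContinuousOn f (uIcc a b)) (hg : ContinuousOn g (uIcc a b)) :
    ∫ t in a..b, f t * g t =
      (1 / 2) * (∫ t in a..b, g t ^ 2) + (1 / 2) * (∫ t in a..b, f t ^ 2)
        - (1 / 2) * ∫ t in a..b, (g t - f t) ^ 2 := by
  rw [← integral_const_mul, ← integral_const_mul, ← integral_const_mul,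
    ← integral_add, ← integral_sub]
  · exact integral_congr fun t _ => by ring
  all_goals first
    | exact ((hg.pow 2).intervalIntegrable.const_mul _).add
        ((hf.pow 2).intervalIntegrable.const_mul _)
    | exact ((hg.sub hf).pow 2).intervalIntegrable.const_mul _
    | exact (hg.pow 2).intervalIntegrable.const_mul _
    | exact (hf.pow 2).intervalIntegrable.const_mul _

theorem intervalIntegral.mul_integral_mul_le {a b : ℝ} (hab : a ≤ b) (c : ℝ) {f g : ℝ → ℝ}
    (hfg : IntervalIntegrable (fun t => f t * g t) volume a b)
    (hf : IntervalIntegrable (fun t => f t ^ 2) volume a b)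
    (hg : IntervalIntegrable (fun t => g t ^ 2) volume a b) :
    c * ∫ t in a..b, f t * g t ≤
      (1 / 2) * (∫ t in a..b, g t ^ 2) + (c ^ 2 / 2) * ∫ t in a..b, f t ^ 2 := by
  rw [← integral_const_mul, ← integral_const_mul, ← integral_const_mul, ← integral_add
    (hg.const_mul _) (hf.const_mul _)]
  refine integral_mono_on hab (hfg.const_mul c) ((hg.const_mul _).add (hf.const_mul _))
    fun t _ => ?_
  nlinarith [sq_nonneg (g t - c * f t)]

theorem Real.arctan_mul_self_nonneg (a : ℝ) : 0 ≤ Real.arctan a * a := by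
  rcases le_total 0 a with h | h
  · exact mul_nonneg (Real.arctan_nonneg.mpr h) h
  · exact mul_nonneg_of_nonpos_of_nonpos (Real.arctan_le_zero.mpr h) h

theorem one_step_energy_inequality_general
    (J r : ℕ) (x : Fin (J + 2) → ℝ)
    (hmono : StrictMono x) (hx0 : x 0 = 0) (hx1 : x (Fin.last (J + 1)) = 1)
    (δ τ ε : ℝ) (hτ : 0 < τ) (hε : 0 ≤ ε) (hε2 : ε ≤ Real.sqrt 2)
    (u w : ℝ → ℝ) (hu : IsFE J r x u) (hw : IsFE J r x w) (ξ : ℝ)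
    (hstep : ∀ v : ℝ → ℝ, IsFE J r x v →
      (∫ t in (0:ℝ)..1, w t * v t)
        + τ * (δ + ε ^ 2 / 2) * (∫ t in (0:ℝ)..1, deriv w t * deriv v t)
        + τ * (1 - ε ^ 2 / 2) *
            (∫ t in (0:ℝ)..1, Real.arctan (deriv w t) * deriv v t)
      = (∫ t in (0:ℝ)..1, u t * v t)
          + ε * (∫ t in (0:ℝ)..1, Real.sqrt (1 + (deriv u t) ^ 2) * v t) * ξ) :
    (1 / 2) * (∫ t in (0:ℝ)..1, (w t) ^ 2)
        - (1 / 2) * (∫ t in (0:ℝ)..1, (u t) ^ 2)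
        + τ * (δ + ε ^ 2 / 2) * (∫ t in (0:ℝ)..1, (deriv w t) ^ 2)
      ≤ ε * (∫ t in (0:ℝ)..1, Real.sqrt (1 + (deriv u t) ^ 2) * u t) * ξ
        + (ε ^ 2 / 2) * (1 + ∫ t in (0:ℝ)..1, (deriv u t) ^ 2) * ξ ^ 2 := by
  set f : ℝ → ℝ := fun t => Real.sqrt (1 + deriv u t ^ 2)
  have hIcc : uIcc (0 : ℝ) 1 = Icc 0 1 := uIcc_of_le zero_le_one
  have hint {φ : ℝ → ℝ} (hφ : Continuous φ) :
      IntervalIntegrable (fun t => φ (deriv u t)) volume 0 1 :=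
    hu.intervalIntegrable_comp_deriv hmono.monotone hx0 hx1 hφ
  have hf : IntervalIntegrable f volume 0 1 :=
    hint (φ := fun y => Real.sqrt (1 + y ^ 2)) (by fun_prop)
  have hf_sq : ∫ t in (0:ℝ)..1, f t ^ 2 = 1 + ∫ t in (0:ℝ)..1, deriv u t ^ 2 := by
    simp only [f, Real.sq_sqrt (add_nonneg zero_le_one (sq_nonneg _))]
    rw [integral_add intervalIntegrable_const (hint (φ := fun y => y ^ 2) (by fun_prop))]
    simp
  have htested := hstep w hw
  simp only [← pow_two] at htested
  have harctan :
      0 ≤ τ * (1 - ε ^ 2 / 2) * ∫ t in (0:ℝ)..1, Real.arctan (deriv w t) * deriv w t := by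
    have hε_sq : ε ^ 2 ≤ 2 := by simpa using pow_le_pow_left₀ hε hε2 2
    exact mul_nonneg (mul_nonneg hτ.le (by linarith))
      (integral_nonneg zero_le_one fun t _ => Real.arctan_mul_self_nonneg _)
  have hpolar := integral_mul_eq_polarization (hIcc ▸ hu.1) (hIcc ▸ hw.1)
  have hdiff : ContinuousOn (fun t => w t - u t) (uIcc 0 1) := hIcc ▸ hw.1.sub hu.1
  have hsplit : ∫ t in (0:ℝ)..1, f t * w t =
      (∫ t in (0:ℝ)..1, f t * u t) + ∫ t in (0:ℝ)..1, f t * (w t - u t) := by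
    rw [← intervalIntegral.integral_add (hf.mul_continuousOn (hIcc ▸ hu.1))
      (hf.mul_continuousOn hdiff)]
    exact integral_congr fun t _ => by ring
  have hyoung := mul_integral_mul_le zero_le_one (ε * ξ) (hf.mul_continuousOn hdiff)
    (hint (φ := fun y => Real.sqrt (1 + y ^ 2) ^ 2) (by fun_prop))
    (hdiff.pow 2).intervalIntegrable
  rw [hsplit] at htested
  rw [hf_sq] at hyoung
  linear_combination htested + hyoung + harctan + hpolar

/-- Pathwise one-step energy inequality for the fully discrete scheme: if
`w ∈ V_r^h` solves one step of the scheme with data `u ∈ V_r^h` and increment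
`ξ ∈ ℝ`, then
`½‖w‖² − ½‖u‖² + τ(δ+ε²/2)‖∂ₓw‖² ≤ ε(√(1+|∂ₓu|²), u)_I ξ + (ε²/2)(1+‖∂ₓu‖²)ξ²`. -/
theorem one_step_energy_inequality
    (J r : ℕ) (hr : 1 ≤ r) (x : Fin (J + 2) → ℝ)
    (hmono : StrictMono x) (hx0 : x 0 = 0) (hx1 : x (Fin.last (J + 1)) = 1)
    (δ τ ε : ℝ) (hδ : 0 ≤ δ) (hτ : 0 < τ) (hε : 0 ≤ ε) (hε2 : ε ≤ Real.sqrt 2)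
    (u w : ℝ → ℝ) (hu : IsFE J r x u) (hw : IsFE J r x w) (ξ : ℝ)
    (hstep : ∀ v : ℝ → ℝ, IsFE J r x v →
      (∫ t in (0:ℝ)..1, w t * v t)
        + τ * (δ + ε ^ 2 / 2) * (∫ t in (0:ℝ)..1, deriv w t * deriv v t)
        + τ * (1 - ε ^ 2 / 2) *
            (∫ t in (0:ℝ)..1, Real.arctan (deriv w t) * deriv v t)
      = (∫ t in (0:ℝ)..1, u t * v t)
          + ε * (∫ t in (0:ℝ)..1, Real.sqrt (1 + (deriv u t) ^ 2) * v t) * ξ) :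
    (1 / 2) * (∫ t in (0:ℝ)..1, (w t) ^ 2)
        - (1 / 2) * (∫ t in (0:ℝ)..1, (u t) ^ 2)
        + τ * (δ + ε ^ 2 / 2) * (∫ t in (0:ℝ)..1, (deriv w t) ^ 2)
      ≤ ε * (∫ t in (0:ℝ)..1, Real.sqrt (1 + (deriv u t) ^ 2) * u t) * ξ
        + (ε ^ 2 / 2) * (1 + ∫ t in (0:ℝ)..1, (deriv u t) ^ 2) * ξ ^ 2 :=
  one_step_energy_inequality_general J r x hmono hx0 hx1 δ τ ε hτ hε hε2 u w hu hw ξ hstep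
end

section
/- Let 0 = x_0 < x_1 < ⋯ < x_{J+1} = 1 be a partition of [0,1], r ≥ 1 an integer, and let V_r^h be the space of continuous functions v : [0,1] → ℝ that restrict to a polynomial of degree at most r on each subinterval [x_j, x_{j+1}] and satisfy v(0) = v(1). Let w : [0,1] → ℝ be twice continuously differentiable with w(0) = w(1) and w′(0) = w′(1). Let z ∈ V_r^h be the elliptic projection of w, i.e. the unique element of V_r^h satisfying (∂ₓz − w′, ∂ₓv)_I + (z − w, v)_I = 0 for all v ∈ V_r^h, and let ∂²_h z ∈ V_r^h be the discrete Laplacian of z, i.e. the unique element of V_r^h satisfying (∂²_h z, v)_I = −(∂ₓz, ∂ₓv)_I for all v ∈ V_r^h. Then ‖∂²_h z‖_{L²(I)} ≤ ‖w″‖_{L²(I)} + ‖w − z‖_{L²(I)}. -/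
open MeasureTheory Set Polynomial

theorem Fin.sum_succ_sub_castSucc {M : Type*} [AddCommGroup M] {n : ℕ} (g : Fin (n + 1) → M) :
    ∑ j : Fin n, (g j.succ - g j.castSucc) = g (last n) - g 0 := by
  induction n with
  | zero => simp
  | succ n ih =>
    rw [sum_univ_castSucc]
    simp only [succ_castSucc]
    rw [ih (fun j => g j.castSucc), succ_last, castSucc_zero]
    abel

section Partition

variable {n : ℕ} {x : Fin (n + 1) → ℝ} {f : ℝ → ℝ} {μ : Measure ℝ}

theorem IntervalIntegrable.trans_iterate_fin
    (h : ∀ j : Fin n, IntervalIntegrable f μ (x j.castSucc) (x j.succ)) :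
    IntervalIntegrable f μ (x 0) (x (Fin.last n)) := by
  induction n with
  | zero => exact .refl
  | succ n ih =>
    have := ih (x := fun j => x j.castSucc) fun j => by
      simpa only [Fin.succ_castSucc] using h j.castSucc
    simpa only [Fin.succ_last, Fin.castSucc_zero] using this.trans (h (Fin.last n))

theorem intervalIntegral.sum_integral_adjacent_intervals_fin
    (h : ∀ j : Fin n, IntervalIntegrable f μ (x j.castSucc) (x j.succ)) :
    ∑ j : Fin n, ∫ t in x j.castSucc..x j.succ, f t ∂μ = ∫ t in x 0..x (Fin.last n), f t ∂μ := by
  induction n with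
  | zero => simp
  | succ n ih =>
    have h' : ∀ j : Fin n, IntervalIntegrable f μ (x j.castSucc.castSucc) (x j.succ.castSucc) :=
      fun j => by simpa only [Fin.succ_castSucc] using h j.castSucc
    rw [Fin.sum_univ_castSucc]
    simp only [Fin.succ_castSucc]
    rw [ih (x := fun j => x j.castSucc) h', Fin.succ_last, Fin.castSucc_zero]
    have h0 := IntervalIntegrable.trans_iterate_fin (x := fun j => x j.castSucc) h'
    rw [Fin.castSucc_zero] at h0
    exact integral_add_adjacent_intervals h0 (h (Fin.last n))

end Partition

theorem Polynomial.eqOn_deriv_of_eqOn_Icc {p : ℝ[X]} {v : ℝ → ℝ} {a b : ℝ}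
    (h : EqOn v p.eval (Icc a b)) : EqOn (deriv v) p.derivative.eval (Ioo a b) := fun _ ht =>
  ((Filter.eventuallyEq_of_mem (Icc_mem_nhds ht.1 ht.2) h).deriv_eq).trans p.deriv

theorem intervalIntegrable_of_eqOn_Ioo {f g : ℝ → ℝ} {a b : ℝ} (hab : a ≤ b) (hg : Continuous g)
    (h : EqOn f g (Ioo a b)) : IntervalIntegrable f volume a b :=
  (hg.intervalIntegrable a b).congr_uIoo (uIoo_of_le hab ▸ h.symm)

theorem integral_mul_deriv_eq_of_eqOn_Icc {p : ℝ[X]} {u v : ℝ → ℝ} {a b : ℝ} (hab : a ≤ b)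
    (hu : ContDiff ℝ 1 u) (hv : EqOn v p.eval (Icc a b)) :
    ∫ t in a..b, u t * deriv v t = u b * v b - u a * v a - ∫ t in a..b, deriv u t * v t := by
  have hv' : EqOn v p.eval (uIcc a b) := uIcc_of_le hab ▸ hv
  calc ∫ t in a..b, u t * deriv v t = ∫ t in a..b, u t * p.derivative.eval t :=
        intervalIntegral.integral_congr_Ioo_of_le hab fun t ht => by
          rw [Polynomial.eqOn_deriv_of_eqOn_Icc hv ht]
    _ = u b * p.eval b - u a * p.eval a - ∫ t in a..b, deriv u t * p.eval t :=
        intervalIntegral.integral_mul_deriv_eq_deriv_mul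
          (fun t _ => (hu.differentiable one_ne_zero t).hasDerivAt) (fun t _ => p.hasDerivAt t)
          ((hu.continuous_deriv le_rfl).intervalIntegrable _ _)
          (p.derivative.continuous.intervalIntegrable _ _)
    _ = u b * v b - u a * v a - ∫ t in a..b, deriv u t * v t := by
        rw [hv' left_mem_uIcc, hv' right_mem_uIcc,
          intervalIntegral.integral_congr (g := fun t => deriv u t * v t)
            fun t ht => congrArg (deriv u t * ·) (hv' ht).symm]

namespace IsFE

variable {J r : ℕ} {x : Fin (J + 2) → ℝ} {u v : ℝ → ℝ}

theorem exists_polynomial_eqOn (hv : IsFE J r x v) (j : Fin (J + 1)) :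
    ∃ p : ℝ[X], EqOn v p.eval (Icc (x j.castSucc) (x j.succ)) ∧
      EqOn (deriv v) p.derivative.eval (Ioo (x j.castSucc) (x j.succ)) :=
  let ⟨p, _, hp⟩ := hv.2.2 j
  ⟨p, hp, Polynomial.eqOn_deriv_of_eqOn_Icc hp⟩

theorem intervalIntegrable_mul_deriv_piece (hx : Monotone x) (hu : Continuous u)
    (hv : IsFE J r x v) (j : Fin (J + 1)) :
    IntervalIntegrable (fun t => u t * deriv v t) volume (x j.castSucc) (x j.succ) := by
  obtain ⟨p, -, hp⟩ := hv.exists_polynomial_eqOn j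
  exact intervalIntegrable_of_eqOn_Ioo (hx j.castSucc_le_succ)
    (g := fun t => u t * p.derivative.eval t) (by fun_prop) fun t ht => by rw [hp ht]

theorem intervalIntegrable_mul_deriv (hx : Monotone x) (hx0 : x 0 = 0)
    (hx1 : x (Fin.last (J + 1)) = 1) (hu : Continuous u) (hv : IsFE J r x v) :
    IntervalIntegrable (fun t => u t * deriv v t) volume 0 1 := by
  rw [← hx0, ← hx1]
  exact .trans_iterate_fin (intervalIntegrable_mul_deriv_piece hx hu hv)

theorem intervalIntegrable_deriv_mul_deriv (hx : Monotone x) (hx0 : x 0 = 0)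
    (hx1 : x (Fin.last (J + 1)) = 1) (hu : IsFE J r x u) (hv : IsFE J r x v) :
    IntervalIntegrable (fun t => deriv u t * deriv v t) volume 0 1 := by
  rw [← hx0, ← hx1]
  refine .trans_iterate_fin fun j => ?_
  obtain ⟨p, -, hp⟩ := hu.exists_polynomial_eqOn j
  obtain ⟨q, -, hq⟩ := hv.exists_polynomial_eqOn j
  exact intervalIntegrable_of_eqOn_Ioo (hx j.castSucc_le_succ)
    (g := fun t => p.derivative.eval t * q.derivative.eval t) (by fun_prop)
    fun t ht => by rw [hp ht, hq ht]

theorem integral_mul_deriv (hx : Monotone x) (hx0 : x 0 = 0) (hx1 : x (Fin.last (J + 1)) = 1)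
    (hu : ContDiff ℝ 1 u) (hper : u 0 = u 1) (hv : IsFE J r x v) :
    ∫ t in (0:ℝ)..1, u t * deriv v t = -∫ t in (0:ℝ)..1, deriv u t * v t := by
  have hle : ∀ j : Fin (J + 1), x j.castSucc ≤ x j.succ := fun j => hx j.castSucc_le_succ
  choose p hp _ using hv.exists_polynomial_eqOn
  have hint : ∀ j : Fin (J + 1),
      IntervalIntegrable (fun t => deriv u t * v t) volume (x j.castSucc) (x j.succ) :=
    fun j => intervalIntegrable_of_eqOn_Ioo (hle j) (g := fun t => deriv u t * (p j).eval t)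
      ((hu.continuous_deriv le_rfl).mul (p j).continuous)
      fun t ht => by rw [hp j (Ioo_subset_Icc_self ht)]
  rw [← hx0, ← hx1,
    ← intervalIntegral.sum_integral_adjacent_intervals_fin
      (intervalIntegrable_mul_deriv_piece hx hu.continuous hv),
    ← intervalIntegral.sum_integral_adjacent_intervals_fin hint,
    Finset.sum_congr rfl fun j _ => integral_mul_deriv_eq_of_eqOn_Icc (hle j) hu (hp j),
    Finset.sum_sub_distrib, Fin.sum_succ_sub_castSucc (fun i => u (x i) * v (x i)),
    hx0, hx1, hper, hv.2.1, sub_self, zero_sub]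

end IsFE

theorem integral_mul_le_sqrt_integral_sq_mul_sqrt_integral_sq {α : Type*} [MeasurableSpace α]
    {μ : Measure α} {f g : α → ℝ} (hf : MemLp f 2 μ) (hg : MemLp g 2 μ) :
    ∫ a, f a * g a ∂μ ≤ √(∫ a, f a ^ 2 ∂μ) * √(∫ a, g a ^ 2 ∂μ) := by
  have hf' : MemLp f (ENNReal.ofReal 2) μ := by simpa using hf
  have hg' : MemLp g (ENNReal.ofReal 2) μ := by simpa using hg
  calc ∫ a, f a * g a ∂μ ≤ ∫ a, ‖f a‖ * ‖g a‖ ∂μ :=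
        integral_mono (hf.integrable_mul hg) (hf.norm.integrable_mul hg.norm)
          fun a => (le_abs_self _).trans_eq (abs_mul _ _)
    _ ≤ (∫ a, ‖f a‖ ^ (2:ℝ) ∂μ) ^ (1 / (2:ℝ)) * (∫ a, ‖g a‖ ^ (2:ℝ) ∂μ) ^ (1 / (2:ℝ)) :=
        integral_mul_norm_le_Lp_mul_Lq Real.HolderConjugate.two_two hf' hg'
    _ = √(∫ a, f a ^ 2 ∂μ) * √(∫ a, g a ^ 2 ∂μ) := by
        simp only [Real.sqrt_eq_rpow, Real.rpow_two, Real.norm_eq_abs, sq_abs, one_div]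

theorem ContinuousOn.memLp_restrict_of_isCompact {α : Type*} [TopologicalSpace α]
    [MeasurableSpace α] [OpensMeasurableSpace α] {μ : Measure α} [IsFiniteMeasureOnCompacts μ]
    {s : Set α} (hs : IsCompact s) (hsm : MeasurableSet s) {f : α → ℝ} (hf : ContinuousOn f s)
    (p : ENNReal) : MemLp f p (μ.restrict s) := by
  have : IsFiniteMeasure (μ.restrict s) := isFiniteMeasure_restrict.2 hs.measure_lt_top.ne
  obtain ⟨C, hC⟩ := hs.exists_bound_of_continuousOn hf
  exact .of_bound (hf.aestronglyMeasurable hsm) C ((ae_restrict_iff' hsm).2 (.of_forall hC))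

theorem intervalIntegral.integral_mul_le_sqrt_integral_sq_mul_sqrt_integral_sq {a b : ℝ}
    (hab : a ≤ b) {f g : ℝ → ℝ} (hf : ContinuousOn f (Icc a b)) (hg : ContinuousOn g (Icc a b)) :
    ∫ t in a..b, f t * g t ≤ √(∫ t in a..b, f t ^ 2) * √(∫ t in a..b, g t ^ 2) := by
  simp only [intervalIntegral.integral_of_le hab, ← integral_Icc_eq_integral_Ioc]
  exact _root_.integral_mul_le_sqrt_integral_sq_mul_sqrt_integral_sq
    (hf.memLp_restrict_of_isCompact isCompact_Icc measurableSet_Icc 2)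
    (hg.memLp_restrict_of_isCompact isCompact_Icc measurableSet_Icc 2)

theorem sqrt_integral_sq_le_of_integral_sq_eq {a b : ℝ} (hab : a ≤ b) {d f g : ℝ → ℝ}
    (hd : ContinuousOn d (Icc a b)) (hf : ContinuousOn f (Icc a b)) (hg : ContinuousOn g (Icc a b))
    (h : ∫ t in a..b, d t ^ 2 = (∫ t in a..b, f t * d t) + ∫ t in a..b, g t * d t) :
    √(∫ t in a..b, d t ^ 2) ≤ √(∫ t in a..b, f t ^ 2) + √(∫ t in a..b, g t ^ 2) := by
  have hfd := intervalIntegral.integral_mul_le_sqrt_integral_sq_mul_sqrt_integral_sq hab hf hd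
  have hgd := intervalIntegral.integral_mul_le_sqrt_integral_sq_mul_sqrt_integral_sq hab hg hd
  have hD : √(∫ t in a..b, d t ^ 2) * √(∫ t in a..b, d t ^ 2) = ∫ t in a..b, d t ^ 2 :=
    Real.mul_self_sqrt (intervalIntegral.integral_nonneg hab fun t _ => sq_nonneg (d t))
  rcases (Real.sqrt_nonneg (∫ t in a..b, d t ^ 2)).eq_or_lt with hD0 | hDpos
  · rw [← hD0]
    positivity
  · exact le_of_mul_le_mul_right (by linarith) hDpos

theorem discrete_laplacian_elliptic_projection_bound_general
    (J r : ℕ) (x : Fin (J + 2) → ℝ)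
    (hmono : StrictMono x) (hx0 : x 0 = 0) (hx1 : x (Fin.last (J + 1)) = 1)
    (w : ℝ → ℝ) (hw : ContDiff ℝ 2 w)
    (hwper' : deriv w 0 = deriv w 1)
    (z : ℝ → ℝ) (hz : IsFE J r x z)
    (hproj : ∀ v : ℝ → ℝ, IsFE J r x v →
      (∫ t in (0:ℝ)..1, (deriv z t - deriv w t) * deriv v t)
        + (∫ t in (0:ℝ)..1, (z t - w t) * v t) = 0)
    (d2z : ℝ → ℝ) (hd2z : IsFE J r x d2z)
    (hlap : ∀ v : ℝ → ℝ, IsFE J r x v →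
      (∫ t in (0:ℝ)..1, d2z t * v t) = -∫ t in (0:ℝ)..1, deriv z t * deriv v t) :
    Real.sqrt (∫ t in (0:ℝ)..1, (d2z t) ^ 2)
      ≤ Real.sqrt (∫ t in (0:ℝ)..1, (deriv (deriv w) t) ^ 2)
        + Real.sqrt (∫ t in (0:ℝ)..1, (w t - z t) ^ 2) := by
  have hx := hmono.monotone
  have hw' : ContDiff ℝ 1 (deriv w) := hw.deriv'
  have hibp := hd2z.integral_mul_deriv hx hx0 hx1 hw' hwper'
  have hsplit : ∫ t in (0:ℝ)..1, (deriv z t - deriv w t) * deriv d2z t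
      = (∫ t in (0:ℝ)..1, deriv z t * deriv d2z t) - ∫ t in (0:ℝ)..1, deriv w t * deriv d2z t := by
    simp only [sub_mul]
    exact intervalIntegral.integral_sub
      (hz.intervalIntegrable_deriv_mul_deriv hx hx0 hx1 hd2z)
      (hd2z.intervalIntegrable_mul_deriv hx hx0 hx1 hw'.continuous)
  have henergy : ∫ t in (0:ℝ)..1, d2z t ^ 2
      = (∫ t in (0:ℝ)..1, deriv (deriv w) t * d2z t) + ∫ t in (0:ℝ)..1, (z t - w t) * d2z t := by
    simp only [sq]
    linarith [hlap d2z hd2z, hproj d2z hd2z]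
  have hzw : ∫ t in (0:ℝ)..1, (w t - z t) ^ 2 = ∫ t in (0:ℝ)..1, (z t - w t) ^ 2 :=
    intervalIntegral.integral_congr fun t _ => by ring
  rw [hzw]
  exact sqrt_integral_sq_le_of_integral_sq_eq zero_le_one hd2z.1
    (hw'.continuous_deriv le_rfl).continuousOn (hz.1.sub hw.continuous.continuousOn) henergy

/-- `L²`-stability of the discrete Laplacian applied to the elliptic projection
(inequality (3.18)): if `z` is the elliptic projection of a periodic `C²`
function `w` and `∂²_h z` its discrete Laplacian, then
`‖∂²_h z‖_{L²} ≤ ‖w″‖_{L²} + ‖w − z‖_{L²}`. -/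
theorem discrete_laplacian_elliptic_projection_bound
    (J r : ℕ) (hr : 1 ≤ r) (x : Fin (J + 2) → ℝ)
    (hmono : StrictMono x) (hx0 : x 0 = 0) (hx1 : x (Fin.last (J + 1)) = 1)
    (w : ℝ → ℝ) (hw : ContDiff ℝ 2 w) (hwper : w 0 = w 1)
    (hwper' : deriv w 0 = deriv w 1)
    (z : ℝ → ℝ) (hz : IsFE J r x z)
    (hproj : ∀ v : ℝ → ℝ, IsFE J r x v →
      (∫ t in (0:ℝ)..1, (deriv z t - deriv w t) * deriv v t)
        + (∫ t in (0:ℝ)..1, (z t - w t) * v t) = 0)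
    (d2z : ℝ → ℝ) (hd2z : IsFE J r x d2z)
    (hlap : ∀ v : ℝ → ℝ, IsFE J r x v →
      (∫ t in (0:ℝ)..1, d2z t * v t) = -∫ t in (0:ℝ)..1, deriv z t * deriv v t) :
    Real.sqrt (∫ t in (0:ℝ)..1, (d2z t) ^ 2)
      ≤ Real.sqrt (∫ t in (0:ℝ)..1, (deriv (deriv w) t) ^ 2)
        + Real.sqrt (∫ t in (0:ℝ)..1, (w t - z t) ^ 2) :=
  discrete_laplacian_elliptic_projection_bound_general J r x hmono hx0 hx1 w hw hwper' z hz hproj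
    d2z hd2z hlap
end
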